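/- Let X₁, X₂, … be i.i.d. real-valued random variables whose common law μ is atomless with finite second moment, let F be the cumulative distribution function of μ, and let Δ(F) = ∫ (e_X(x) − F(x)) dμ(x) where e_X(x) = ∫ t(t−x) 1{t ≤ x} dμ(t). Define the statistic Δ̂ₙ = (2/(n(n−1))) Σ_{1 ≤ j < i ≤ n} (1/2)(min(Xᵢ, Xⱼ)² − Xᵢ Xⱼ) − 1/2. Then Δ̂ₙ converges in probability to Δ(F) as n → ∞. -/

import Mathlib

set_option linter.unusedSectionVars false
open MeasureTheory ProbabilityTheory Finset Topology

variable (μ : Measure ℝ) [IsProbabilityMeasure μ] [NullSingletonClass μ]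

lemma diag_null : (μ.prod μ) {p : ℝ × ℝ | p.1 = p.2} = 0 := by
  have hm : MeasurableSet {p : ℝ × ℝ | p.1 = p.2} :=
    measurableSet_eq_fun measurable_fst measurable_snd
  rw [Measure.prod_apply hm]
  have : ∀ x : ℝ, μ (Prod.mk x ⁻¹' {p : ℝ × ℝ | p.1 = p.2}) = 0 := by
    intro x
    have : Prod.mk x ⁻¹' {p : ℝ × ℝ | p.1 = p.2} = {x} := by
      ext y; simp [eq_comm]
    rw [this]; exact measure_singleton x
  simp [this]

lemma sym_integral (g : ℝ → ℝ) (hg : Measurable g)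
    (hint : Integrable (fun p : ℝ × ℝ => g p.1 * g p.2) (μ.prod μ)) :
    ∫ p, (if p.2 ≤ p.1 then g p.1 * g p.2 else 0) ∂(μ.prod μ)
      = (∫ x, g x ∂μ) ^ 2 / 2 := by
  set G : ℝ × ℝ → ℝ := fun p => g p.1 * g p.2 with hG
  have hGm : Measurable G := (hg.comp measurable_fst).mul (hg.comp measurable_snd)
  set I : ℝ × ℝ → ℝ := fun p => if p.2 ≤ p.1 then G p else 0 with hI
  set I' : ℝ × ℝ → ℝ := fun p => if p.1 ≤ p.2 then G p else 0 with hI'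
  set D : ℝ × ℝ → ℝ := fun p => if p.1 = p.2 then G p else 0 with hD
  have hle : MeasurableSet {p : ℝ × ℝ | p.2 ≤ p.1} :=
    measurableSet_le measurable_snd measurable_fst
  have hle' : MeasurableSet {p : ℝ × ℝ | p.1 ≤ p.2} :=
    measurableSet_le measurable_fst measurable_snd
  have hIm : Measurable I := hGm.ite hle measurable_const
  have hI'm : Measurable I' := hGm.ite hle' measurable_const
  have hIint : Integrable I (μ.prod μ) := by
    refine hint.abs.mono' hIm.aestronglyMeasurable ?_
    filter_upwards with p
    by_cases h : p.2 ≤ p.1 <;> simp [hI, h, abs_nonneg, le_abs_self]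
  have hI'int : Integrable I' (μ.prod μ) := by
    refine hint.abs.mono' hI'm.aestronglyMeasurable ?_
    filter_upwards with p
    by_cases h : p.1 ≤ p.2 <;> simp [hI', h, abs_nonneg, le_abs_self]
  have hswap : ∫ p, I' p ∂(μ.prod μ) = ∫ p, I p ∂(μ.prod μ) := by
    have h1 : ∫ p, I' p ∂(μ.prod μ) = ∫ p, I' p ∂(Measure.map Prod.swap (μ.prod μ)) := by
      rw [Measure.prod_swap]
    rw [h1, integral_map measurable_swap.aemeasurable hI'm.aestronglyMeasurable]
    refine integral_congr_ae (Filter.Eventually.of_forall fun p => ?_)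
    simp only [hI', hI, Prod.swap, hG]
    by_cases h : p.2 ≤ p.1 <;> simp [h, mul_comm]
  have hDzero : ∫ p, D p ∂(μ.prod μ) = 0 := by
    have : D =ᵐ[μ.prod μ] 0 := by
      have hd : ∀ᵐ p ∂(μ.prod μ), p ∉ {p : ℝ × ℝ | p.1 = p.2} :=
        (ae_iff.mpr (by simpa using diag_null μ))
      filter_upwards [hd] with p hp
      have hp' : ¬ (p.1 = p.2) := hp
      show (if p.1 = p.2 then G p else 0) = 0
      simp [hp']
    rw [integral_congr_ae this]
    simp
  have hsum : ∀ p : ℝ × ℝ, I p + I' p = G p + D p := by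
    intro p
    simp only [hI, hI', hD]
    rcases lt_trichotomy p.1 p.2 with h | h | h
    · simp [h.le, not_le.mpr h, h.ne]
    · simp [h, le_of_eq h]
    · simp [h.le, not_le.mpr h, h.ne']
  have hGint : ∫ p, G p ∂(μ.prod μ) = (∫ x, g x ∂μ) ^ 2 := by
    rw [hG, integral_prod_mul, sq]
  have key : ∫ p, I p ∂(μ.prod μ) + ∫ p, I' p ∂(μ.prod μ)
      = (∫ x, g x ∂μ) ^ 2 + 0 := by
    rw [← integral_add hIint hI'int, ← hGint, ← hDzero, ← integral_add hint ?_]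
    · exact integral_congr_ae (Filter.Eventually.of_forall hsum)
    · refine hint.abs.mono' (hGm.ite (measurableSet_eq_fun measurable_fst measurable_snd)
        measurable_const).aestronglyMeasurable ?_
      filter_upwards with p
      by_cases h : p.1 = p.2 <;> simp [hD, h, abs_nonneg, le_abs_self]
  rw [hswap] at key
  linarith

lemma abs_le_one_add_sq (t : ℝ) : |t| ≤ 1 + t ^ 2 := by
  nlinarith [sq_nonneg (|t| - 1), sq_abs t, abs_nonneg t]

lemma habs (h2 : Integrable (fun t => t ^ 2) μ) : Integrable (fun t : ℝ => |t|) μ := by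
  refine ((integrable_const (1:ℝ)).add h2).mono'
    (measurable_abs.aestronglyMeasurable) ?_
  filter_upwards with t
  simpa [abs_abs] using abs_le_one_add_sq t

lemma hid (h2 : Integrable (fun t => t ^ 2) μ) : Integrable (fun t : ℝ => t) μ :=
  (habs μ h2).mono' measurable_id.aestronglyMeasurable
    (Filter.Eventually.of_forall fun t => by simp)

lemma int_F : ∫ x, (μ (Set.Iic x)).toReal ∂μ = 1 / 2 := by
  have h1 : Integrable (fun p : ℝ × ℝ => (1:ℝ) * 1) (μ.prod μ) := by
    simpa using integrable_const (μ := μ.prod μ) (1:ℝ)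
  have hs := sym_integral μ (fun _ => (1:ℝ)) measurable_const h1
  simp only [integral_const, measure_univ, probReal_univ, ENNReal.toReal_one, smul_eq_mul, mul_one,
    one_pow] at hs
  have hint : Integrable (fun p : ℝ × ℝ => if p.2 ≤ p.1 then (1:ℝ) else 0) (μ.prod μ) := by
    refine (integrable_const (1:ℝ)).mono'
      ((measurable_const.ite (measurableSet_le measurable_snd measurable_fst)
        measurable_const)).aestronglyMeasurable ?_
    filter_upwards with p
    by_cases h : p.2 ≤ p.1 <;> simp [h]
  rw [integral_prod _ hint] at hs
  have : ∀ x : ℝ, (∫ t, (if t ≤ x then (1:ℝ) else 0) ∂μ) = (μ (Set.Iic x)).toReal := by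
    intro x
    have : (fun t => if t ≤ x then (1:ℝ) else 0)
        = Set.indicator (Set.Iic x) (fun _ => (1:ℝ)) := by
      ext t; simp [Set.indicator_apply, Set.mem_Iic]
    rw [this, integral_indicator_const _ measurableSet_Iic]
    simp [measureReal_def]
  simp only [this] at hs
  linarith [hs]

lemma K_integrable (h2 : Integrable (fun t => t ^ 2) μ) :
    Integrable (fun p : ℝ × ℝ => if p.2 ≤ p.1 then p.2 * (p.2 - p.1) else 0) (μ.prod μ) := by
  have hb : Integrable (fun p : ℝ × ℝ => (1 + |p.1|) * (p.2 ^ 2 + |p.2|)) (μ.prod μ) :=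
    ((integrable_const (1:ℝ)).add (habs μ h2)).mul_prod (h2.add (habs μ h2))
  refine hb.mono' ?_ ?_
  · exact ((measurable_snd.mul (measurable_snd.sub measurable_fst)).ite
      (measurableSet_le measurable_snd measurable_fst) measurable_const).aestronglyMeasurable
  · filter_upwards with p
    have h1 : |p.2 * (p.2 - p.1)| ≤ (1 + |p.1|) * (p.2 ^ 2 + |p.2|) := by
      rw [abs_mul]
      have h2' : |p.2 - p.1| ≤ |p.2| + |p.1| := abs_sub p.2 p.1
      have h3 : |p.2| * |p.2 - p.1| ≤ |p.2| * (|p.2| + |p.1|) :=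
        mul_le_mul_of_nonneg_left h2' (abs_nonneg _)
      nlinarith [abs_nonneg p.1, abs_nonneg p.2, sq_abs p.2, sq_nonneg p.2]
    have hnn : (0:ℝ) ≤ (1 + |p.1|) * (p.2 ^ 2 + |p.2|) := by positivity
    by_cases h : p.2 ≤ p.1 <;> simp only [h, if_true, if_false] <;>
      [skip; simpa using hnn]
    calc ‖p.2 * (p.2 - p.1)‖ = |p.2 * (p.2 - p.1)| := rfl
      _ ≤ (1 + |p.1|) * (p.2 ^ 2 + |p.2|) := h1

lemma e_eq (x : ℝ) :
    (∫ t in Set.Iic x, t * (t - x) ∂μ)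
      = ∫ t, (if t ≤ x then t * (t - x) else 0) ∂μ := by
  rw [← integral_indicator measurableSet_Iic]
  refine integral_congr_ae (Filter.Eventually.of_forall fun t => ?_)
  simp [Set.indicator_apply, Set.mem_Iic]

lemma e_integrable (h2 : Integrable (fun t => t ^ 2) μ) :
    Integrable (fun x => ∫ t in Set.Iic x, t * (t - x) ∂μ) μ := by
  have h := (K_integrable μ h2).integral_prod_left
  refine h.congr (Filter.Eventually.of_forall fun x => ?_)
  simp only
  rw [← e_eq]

lemma Ici_toReal (t : ℝ) : (μ (Set.Ici t)).toReal = (μ (Set.Ioi t)).toReal := by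
  rw [measure_congr (MeasureTheory.Ioi_ae_eq_Ici (μ := μ) (a := t)).symm]

lemma int_e (h2 : Integrable (fun t => t ^ 2) μ) :
    ∫ x, (∫ t in Set.Iic x, t * (t - x) ∂μ) ∂μ
      = (∫ t, t ^ 2 * (μ (Set.Ioi t)).toReal ∂μ) - (∫ t, t ∂μ) ^ 2 / 2 := by
  have hK := K_integrable μ h2
  have step1 : ∫ x, (∫ t in Set.Iic x, t * (t - x) ∂μ) ∂μ
      = ∫ p, (if p.2 ≤ p.1 then p.2 * (p.2 - p.1) else 0) ∂(μ.prod μ) := by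
    rw [integral_prod _ hK]
    exact integral_congr_ae (Filter.Eventually.of_forall fun x => e_eq μ x)
  -- split kernel
  set K1 : ℝ × ℝ → ℝ := fun p => if p.2 ≤ p.1 then p.2 ^ 2 else 0 with hK1def
  set K2 : ℝ × ℝ → ℝ := fun p => if p.2 ≤ p.1 then p.1 * p.2 else 0 with hK2def
  have hle : MeasurableSet {p : ℝ × ℝ | p.2 ≤ p.1} :=
    measurableSet_le measurable_snd measurable_fst
  have hK1m : Measurable K1 := (measurable_snd.pow_const 2).ite hle measurable_const
  have hK2m : Measurable K2 := (measurable_fst.mul measurable_snd).ite hle measurable_const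
  have hsq2 : Integrable (fun p : ℝ × ℝ => (1:ℝ) * p.2 ^ 2) (μ.prod μ) :=
    (integrable_const (1:ℝ)).mul_prod h2
  have habsprod : Integrable (fun p : ℝ × ℝ => |p.1| * |p.2|) (μ.prod μ) :=
    (habs μ h2).mul_prod (habs μ h2)
  have hK1int : Integrable K1 (μ.prod μ) := by
    refine hsq2.mono' hK1m.aestronglyMeasurable ?_
    filter_upwards with p
    by_cases h : p.2 ≤ p.1 <;> simp [K1, h, sq_nonneg, abs_of_nonneg (sq_nonneg p.2)]
  have hK2int : Integrable K2 (μ.prod μ) := by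
    refine habsprod.mono' hK2m.aestronglyMeasurable ?_
    filter_upwards with p
    by_cases h : p.2 ≤ p.1 <;>
      simp [K2, h, abs_mul, mul_nonneg (abs_nonneg p.1) (abs_nonneg p.2), abs_mul]
  have hsplit : ∀ p : ℝ × ℝ, (if p.2 ≤ p.1 then p.2 * (p.2 - p.1) else 0) = K1 p - K2 p := by
    intro p
    by_cases h : p.2 ≤ p.1 <;> simp [K1, K2, h] <;> ring
  have step2 : ∫ p, (if p.2 ≤ p.1 then p.2 * (p.2 - p.1) else 0) ∂(μ.prod μ)
      = (∫ p, K1 p ∂(μ.prod μ)) - ∫ p, K2 p ∂(μ.prod μ) := by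
    rw [← integral_sub hK1int hK2int]
    exact integral_congr_ae (Filter.Eventually.of_forall hsplit)
  -- K2 via symmetry
  have hK2val : ∫ p, K2 p ∂(μ.prod μ) = (∫ t, t ∂μ) ^ 2 / 2 := by
    have hmul : Integrable (fun p : ℝ × ℝ => p.1 * p.2) (μ.prod μ) := by
      have := (hid μ h2).mul_prod (hid μ h2)
      simpa using this
    exact sym_integral μ (fun t => t) measurable_id hmul
  -- K1 via swap + Fubini
  have hK1val : ∫ p, K1 p ∂(μ.prod μ) = ∫ t, t ^ 2 * (μ (Set.Ioi t)).toReal ∂μ := by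
    set J : ℝ × ℝ → ℝ := fun p => if p.1 ≤ p.2 then p.1 ^ 2 else 0 with hJdef
    have hJm : Measurable J := (measurable_fst.pow_const 2).ite
      (measurableSet_le measurable_fst measurable_snd) measurable_const
    have hswap : ∫ p, K1 p ∂(μ.prod μ) = ∫ p, J p ∂(μ.prod μ) := by
      have h1 : ∫ p, J p ∂(μ.prod μ) = ∫ p, J p ∂(Measure.map Prod.swap (μ.prod μ)) := by
        rw [Measure.prod_swap]
      rw [h1, integral_map measurable_swap.aemeasurable hJm.aestronglyMeasurable]
      refine integral_congr_ae (Filter.Eventually.of_forall fun p => ?_)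
      simp only [J, K1, Prod.swap]
    have hJint : Integrable J (μ.prod μ) := by
      have hsq1 : Integrable (fun p : ℝ × ℝ => p.1 ^ 2 * (1:ℝ)) (μ.prod μ) :=
        h2.mul_prod (integrable_const (1:ℝ))
      refine hsq1.mono' hJm.aestronglyMeasurable ?_
      filter_upwards with p
      by_cases h : p.1 ≤ p.2 <;> simp [J, h, abs_of_nonneg (sq_nonneg p.1), sq_nonneg]
    rw [hswap, integral_prod _ hJint]
    refine integral_congr_ae (Filter.Eventually.of_forall fun t => ?_)
    have : (fun x => if t ≤ x then t ^ 2 else 0)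
        = Set.indicator (Set.Ici t) (fun _ => t ^ 2) := by
      ext x; simp [Set.indicator_apply, Set.mem_Ici]
    simp only [J]
    rw [this, integral_indicator_const _ measurableSet_Ici, smul_eq_mul,
      measureReal_def, Ici_toReal, mul_comm]
  rw [step1, step2, hK1val, hK2val]

lemma F_integrable : Integrable (fun x => (μ (Set.Iic x)).toReal) μ := by
  refine (integrable_const (1:ℝ)).mono'
    (Measurable.aestronglyMeasurable ?_) ?_
  · exact ENNReal.measurable_toReal.comp
      (Monotone.measurable (fun a b hab => measure_mono (Set.Iic_subset_Iic.mpr hab)))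
  · filter_upwards with x
    rw [Real.norm_eq_abs, abs_of_nonneg ENNReal.toReal_nonneg]
    exact ENNReal.toReal_le_of_le_ofReal zero_le_one (by simpa using prob_le_one)

lemma theta_eq (h2 : Integrable (fun t => t ^ 2) μ) :
    ∫ x, ((∫ t in Set.Iic x, t * (t - x) ∂μ) - (μ (Set.Iic x)).toReal) ∂μ
      = (∫ t, t ^ 2 * (μ (Set.Ioi t)).toReal ∂μ) - (∫ t, t ∂μ) ^ 2 / 2 - 1 / 2 := by
  rw [integral_sub (e_integrable μ h2) (F_integrable μ), int_e μ h2, int_F μ]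

lemma sum_pairs (w : ℕ → ℕ → ℝ) (n : ℕ) :
    ∑ i ∈ range n, ∑ j ∈ range i, (w i j + w j i)
      = (∑ i ∈ range n, ∑ j ∈ range n, w i j) - ∑ i ∈ range n, w i i := by
  induction n with
  | zero => simp
  | succ n ih =>
    have expand : ∑ i ∈ range (n+1), ∑ j ∈ range (n+1), w i j
        = (∑ i ∈ range n, ∑ j ∈ range n, w i j) + (∑ i ∈ range n, w i n)
          + ((∑ j ∈ range n, w n j) + w n n) := by
      simp only [Finset.sum_range_succ, Finset.sum_add_distrib]
      try ring
    rw [Finset.sum_range_succ, ih, expand, Finset.sum_range_succ (f := fun i => w i i),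
      Finset.sum_add_distrib]
    ring

lemma pairs_identity (a : ℕ → ℝ) (hne : ∀ i j : ℕ, i ≠ j → a i ≠ a j) (n : ℕ) :
    ∑ i ∈ range n, ∑ j ∈ range i, (min (a i) (a j) ^ 2 - a i * a j)
      = (∑ i ∈ range n, (a i) ^ 2 * (∑ j ∈ range n, (if a i < a j then (1:ℝ) else 0)))
        - ((∑ i ∈ range n, a i) ^ 2 - ∑ i ∈ range n, (a i) ^ 2) / 2 := by
  set w : ℕ → ℕ → ℝ :=
    fun i j => (a i) ^ 2 * (if a i < a j then 1 else 0) - a i * a j / 2 with hwdef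
  have hterm : ∀ i j : ℕ, i ≠ j →
      min (a i) (a j) ^ 2 - a i * a j = w i j + w j i := by
    intro i j hij
    have hne' := hne i j hij
    rcases lt_or_gt_of_ne hne' with h | h
    · have h1 : min (a i) (a j) = a i := min_eq_left h.le
      simp only [w, h1, if_pos h, if_neg (not_lt.mpr h.le)]
      ring
    · have h1 : min (a i) (a j) = a j := min_eq_right h.le
      simp only [w, h1, if_neg (not_lt.mpr h.le), if_pos h]
      ring
  have hmain : ∑ i ∈ range n, ∑ j ∈ range i, (min (a i) (a j) ^ 2 - a i * a j)
      = ∑ i ∈ range n, ∑ j ∈ range i, (w i j + w j i) := by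
    refine Finset.sum_congr rfl fun i _ => Finset.sum_congr rfl fun j hj => ?_
    exact hterm i j (by have := Finset.mem_range.mp hj; omega)
  rw [hmain, sum_pairs]
  have hw : ∀ i, ∑ j ∈ range n, w i j
      = (a i) ^ 2 * (∑ j ∈ range n, if a i < a j then (1:ℝ) else 0)
        - a i * (∑ j ∈ range n, a j) / 2 := by
    intro i
    simp only [w]
    rw [Finset.sum_sub_distrib, ← Finset.mul_sum, ← Finset.sum_div, ← Finset.mul_sum]
  have hdiag : ∀ i : ℕ, w i i = -(a i ^ 2 / 2) := by
    intro i
    simp only [w]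
    rw [if_neg (lt_irrefl (a i))]
    ring
  rw [Finset.sum_congr rfl (fun i _ => hw i), Finset.sum_congr rfl (fun i _ => hdiag i),
    Finset.sum_sub_distrib]
  have h1 : ∑ i ∈ range n, (a i * (∑ j ∈ range n, a j) / 2)
      = (∑ i ∈ range n, a i) ^ 2 / 2 := by
    rw [← Finset.sum_div, ← Finset.sum_mul]
    ring
  have h2 : ∑ i ∈ range n, -(a i ^ 2 / 2) = -((∑ i ∈ range n, a i ^ 2) / 2) := by
    rw [Finset.sum_neg_distrib, ← Finset.sum_div]
  rw [h1, h2]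
  ring

lemma TIM_add {Ω : Type*} [MeasurableSpace Ω] (P : Measure Ω) {f f' : ℕ → Ω → ℝ} {g g' : Ω → ℝ}
    (hf : TendstoInMeasure P f Filter.atTop g) (hf' : TendstoInMeasure P f' Filter.atTop g') :
    TendstoInMeasure P (fun n ω => f n ω + f' n ω) Filter.atTop (fun ω => g ω + g' ω) := by
  rw [tendstoInMeasure_iff_dist] at hf hf' ⊢
  intro ε hε
  have hsub : ∀ n, {ω | ε ≤ dist (f n ω + f' n ω) (g ω + g' ω)}
      ⊆ {ω | ε/2 ≤ dist (f n ω) (g ω)} ∪ {ω | ε/2 ≤ dist (f' n ω) (g' ω)} := by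
    intro n ω hω
    simp only [Set.mem_setOf_eq] at hω
    by_contra hc
    simp only [Set.mem_union, Set.mem_setOf_eq, not_or, not_le] at hc
    have htri : dist (f n ω + f' n ω) (g ω + g' ω)
        ≤ dist (f n ω) (g ω) + dist (f' n ω) (g' ω) := dist_add_add_le _ _ _ _
    linarith [hc.1, hc.2]
  have hb : ∀ n, P {ω | ε ≤ dist (f n ω + f' n ω) (g ω + g' ω)}
      ≤ P {ω | ε/2 ≤ dist (f n ω) (g ω)} + P {ω | ε/2 ≤ dist (f' n ω) (g' ω)} :=
    fun n => le_trans (measure_mono (hsub n)) (measure_union_le _ _)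
  have h0 := (hf (ε/2) (by linarith)).add (hf' (ε/2) (by linarith))
  rw [add_zero] at h0
  exact tendsto_of_tendsto_of_tendsto_of_le_of_le tendsto_const_nhds h0
    (fun n => zero_le) hb

section Prob

variable {Ω : Type*} [MeasurableSpace Ω] {P : Measure Ω} [IsProbabilityMeasure P]
  {X : ℕ → Ω → ℝ} {μ : Measure ℝ} [IsProbabilityMeasure μ] [NullSingletonClass μ]

lemma slln_comp (hXm : ∀ i, Measurable (X i))
    (hindep : iIndepFun X P)
    (hdist : ∀ i, Measure.map (X i) P = μ)
    (ψ : ℝ → ℝ) (hψ : Measurable ψ) (hint : Integrable ψ μ) :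
    ∀ᵐ ω ∂P, Filter.Tendsto (fun n : ℕ => (∑ i ∈ range n, ψ (X i ω)) / n)
      Filter.atTop (𝓝 (∫ x, ψ x ∂μ)) := by
  have h0 : Integrable (fun ω => ψ (X 0 ω)) P := by
    have := (integrable_map_measure hψ.aestronglyMeasurable (hXm 0).aemeasurable).mp
      (by rwa [hdist 0])
    exact this
  have hpair : Pairwise (Function.onFun (IndepFun · · P) (fun i ω => ψ (X i ω))) :=
    fun i j hij => (hindep.indepFun hij).comp hψ hψ
  have hident : ∀ i, IdentDistrib (fun ω => ψ (X i ω)) (fun ω => ψ (X 0 ω)) P P := by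
    intro i
    refine ⟨(hψ.comp (hXm i)).aemeasurable, (hψ.comp (hXm 0)).aemeasurable, ?_⟩
    show Measure.map (ψ ∘ X i) P = Measure.map (ψ ∘ X 0) P
    rw [← Measure.map_map hψ (hXm i), ← Measure.map_map hψ (hXm 0), hdist i, hdist 0]
  have hval : (∫ ω, ψ (X 0 ω) ∂P) = ∫ x, ψ x ∂μ := by
    rw [← hdist 0, integral_map (hXm 0).aemeasurable hψ.aestronglyMeasurable]
  have := ProbabilityTheory.strong_law_ae_real _ h0 hpair hident
  filter_upwards [this] with ω hω
  rwa [hval] at hω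

lemma map_pair (hXm : ∀ i, Measurable (X i))
    (hindep : iIndepFun X P)
    (hdist : ∀ i, Measure.map (X i) P = μ)
    {i j : ℕ} (hij : i ≠ j) :
    Measure.map (fun ω => (X i ω, X j ω)) P = μ.prod μ := by
  have h := (indepFun_iff_map_prod_eq_prod_map_map (hXm i).aemeasurable
    (hXm j).aemeasurable).mp (hindep.indepFun hij)
  rw [h, hdist i, hdist j]

lemma ties (hXm : ∀ i, Measurable (X i))
    (hindep : iIndepFun X P)
    (hdist : ∀ i, Measure.map (X i) P = μ) :
    ∀ᵐ ω ∂P, ∀ i j : ℕ, i ≠ j → X i ω ≠ X j ω := by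
  rw [ae_all_iff]
  intro i
  rw [ae_all_iff]
  intro j
  by_cases hij : i = j
  · subst hij
    filter_upwards with ω h
    exact absurd rfl h
  · have hm : MeasurableSet {p : ℝ × ℝ | p.1 = p.2} :=
      measurableSet_eq_fun measurable_fst measurable_snd
    have hz : P {ω | X i ω = X j ω} = 0 := by
      have hpre : {ω | X i ω = X j ω}
          = (fun ω => (X i ω, X j ω)) ⁻¹' {p : ℝ × ℝ | p.1 = p.2} := rfl
      rw [hpre, ← Measure.map_apply ((hXm i).prodMk (hXm j)) hm,
        map_pair hXm hindep hdist hij, diag_null]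
    have : ∀ᵐ ω ∂P, ω ∉ {ω | X i ω = X j ω} := ae_iff.mpr (by simpa using hz)
    filter_upwards [this] with ω hω _
    exact hω

end Prob

noncomputable def Sv (μ : Measure ℝ) (x : ℝ) : ℝ := (μ (Set.Ioi x)).toReal

lemma Sv_meas (μ : Measure ℝ) : Measurable (Sv μ) :=
  ENNReal.measurable_toReal.comp
    (Antitone.measurable (fun a b hab => measure_mono (Set.Ioi_subset_Ioi hab)))

lemma Sv_nonneg (μ : Measure ℝ) (x : ℝ) : 0 ≤ Sv μ x := ENNReal.toReal_nonneg

lemma Sv_le_one (μ : Measure ℝ) [IsProbabilityMeasure μ] (x : ℝ) : Sv μ x ≤ 1 :=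
  ENNReal.toReal_le_of_le_ofReal zero_le_one (by simpa using prob_le_one)

lemma Z_abs_le (c : Prop) [Decidable c] {s : ℝ} (h0 : 0 ≤ s) (h1 : s ≤ 1) :
    |(if c then (1:ℝ) else 0) - s| ≤ 1 := by
  rw [abs_le]
  by_cases hc : c <;> simp [hc] <;> constructor <;> linarith

lemma ind_integral (μ : Measure ℝ) [IsProbabilityMeasure μ] (x : ℝ) :
    ∫ t, (if x < t then (1:ℝ) else 0) ∂μ = Sv μ x := by
  have : (fun t => if x < t then (1:ℝ) else 0)
      = Set.indicator (Set.Ioi x) (fun _ => (1:ℝ)) := by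
    ext t; simp [Set.indicator_apply, Set.mem_Ioi]
  rw [this, integral_indicator_const _ measurableSet_Ioi]
  simp [Sv, measureReal_def]

lemma ind_integrable (μ : Measure ℝ) [IsProbabilityMeasure μ] (x : ℝ) :
    Integrable (fun t => if x < t then (1:ℝ) else 0) μ := by
  have hm : Measurable (fun t : ℝ => if x < t then (1:ℝ) else 0) :=
    Measurable.ite (measurableSet_lt measurable_const measurable_id) measurable_const
      measurable_const
  refine (integrable_const (1:ℝ)).mono' hm.aestronglyMeasurable ?_
  filter_upwards with t
  by_cases h : x < t <;> simp [h]

lemma zz_le_one {z : ℝ} (hz : |z| ≤ 1) : z * z ≤ 1 := by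
  nlinarith [abs_mul_abs_self z, abs_nonneg z]

section Prob2

variable {Ω : Type*} [MeasurableSpace Ω] {P : Measure Ω} [IsProbabilityMeasure P]
  {X : ℕ → Ω → ℝ} {μ : Measure ℝ} [IsProbabilityMeasure μ] [NullSingletonClass μ]

lemma sq_int (hXm : ∀ i, Measurable (X i)) (hdist : ∀ i, Measure.map (X i) P = μ)
    (h2 : Integrable (fun t => t ^ 2) μ) (i : ℕ) :
    Integrable (fun ω => (X i ω) ^ 2) P := by
  have := (integrable_map_measure (measurable_id'.pow_const 2).aestronglyMeasurable
    (hXm i).aemeasurable).mp (by rwa [hdist i])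
  simpa [Function.comp_def] using this

lemma sq_val (hXm : ∀ i, Measurable (X i)) (hdist : ∀ i, Measure.map (X i) P = μ) (i : ℕ) :
    ∫ ω, (X i ω) ^ 2 ∂P = ∫ t, t ^ 2 ∂μ := by
  rw [← hdist i, integral_map (hXm i).aemeasurable
    (measurable_id'.pow_const 2).aestronglyMeasurable]

lemma cross_zero (hXm : ∀ i, Measurable (X i))
    (hindep : iIndepFun X P)
    (hdist : ∀ i, Measure.map (X i) P = μ)
    (h2 : Integrable (fun t => t ^ 2) μ)
    {i j k : ℕ} (hij : i ≠ j) (hik : i ≠ k) (hjk : j ≠ k) :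
    ∫ ω, (X i ω) ^ 2 * (((if X i ω < X j ω then (1:ℝ) else 0) - Sv μ (X i ω))
        * ((if X i ω < X k ω then (1:ℝ) else 0) - Sv μ (X i ω))) ∂P = 0 := by
  set H : (ℝ × ℝ) × ℝ → ℝ := fun r => (r.1.1) ^ 2 *
    (((if r.1.1 < r.1.2 then (1:ℝ) else 0) - Sv μ r.1.1)
      * ((if r.1.1 < r.2 then (1:ℝ) else 0) - Sv μ r.1.1)) with hHdef
  have m11 : Measurable (fun r : (ℝ × ℝ) × ℝ => r.1.1) := measurable_fst.comp measurable_fst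
  have m12 : Measurable (fun r : (ℝ × ℝ) × ℝ => r.1.2) := measurable_snd.comp measurable_fst
  have m2 : Measurable (fun r : (ℝ × ℝ) × ℝ => r.2) := measurable_snd
  have hZ1m : Measurable (fun r : (ℝ × ℝ) × ℝ =>
      (if r.1.1 < r.1.2 then (1:ℝ) else 0) - Sv μ r.1.1) :=
    ((measurable_const.ite (measurableSet_lt m11 m12) measurable_const)).sub
      ((Sv_meas μ).comp m11)
  have hZ2m : Measurable (fun r : (ℝ × ℝ) × ℝ =>
      (if r.1.1 < r.2 then (1:ℝ) else 0) - Sv μ r.1.1) :=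
    ((measurable_const.ite (measurableSet_lt m11 m2) measurable_const)).sub
      ((Sv_meas μ).comp m11)
  have hHm : Measurable H := (m11.pow_const 2).mul (hZ1m.mul hZ2m)
  have hWm : Measurable (fun ω => (X i ω, X j ω)) := (hXm i).prodMk (hXm j)
  have hmap : Measure.map (fun ω => ((X i ω, X j ω), X k ω)) P = (μ.prod μ).prod μ := by
    have h := (indepFun_iff_map_prod_eq_prod_map_map hWm.aemeasurable
      (hXm k).aemeasurable).mp (hindep.indepFun_prodMk hXm i j k hik hjk)
    rw [h, map_pair hXm hindep hdist hij, hdist k]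
  have hstep : ∫ ω, (X i ω) ^ 2 * (((if X i ω < X j ω then (1:ℝ) else 0) - Sv μ (X i ω))
        * ((if X i ω < X k ω then (1:ℝ) else 0) - Sv μ (X i ω))) ∂P
      = ∫ r, H r ∂((μ.prod μ).prod μ) := by
    rw [← hmap, integral_map (hWm.prodMk (hXm k)).aemeasurable hHm.aestronglyMeasurable]
  rw [hstep]
  have hb : Integrable (fun r : (ℝ × ℝ) × ℝ => ((fun p : ℝ × ℝ => p.1 ^ 2 * 1) r.1) * 1)
      ((μ.prod μ).prod μ) :=
    (h2.mul_prod (integrable_const 1)).mul_prod (integrable_const 1)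
  have hHint : Integrable H ((μ.prod μ).prod μ) := by
    refine hb.mono' hHm.aestronglyMeasurable ?_
    filter_upwards with r
    have hz1 := Z_abs_le (r.1.1 < r.1.2) (Sv_nonneg μ r.1.1) (Sv_le_one μ r.1.1)
    have hz2 := Z_abs_le (r.1.1 < r.2) (Sv_nonneg μ r.1.1) (Sv_le_one μ r.1.1)
    have : ‖H r‖ = r.1.1 ^ 2 * (|(if r.1.1 < r.1.2 then (1:ℝ) else 0) - Sv μ r.1.1|
        * |(if r.1.1 < r.2 then (1:ℝ) else 0) - Sv μ r.1.1|) := by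
      rw [hHdef]
      simp only [Real.norm_eq_abs, abs_mul, abs_of_nonneg (sq_nonneg r.1.1)]
    rw [this]
    have h1 : |(if r.1.1 < r.1.2 then (1:ℝ) else 0) - Sv μ r.1.1|
        * |(if r.1.1 < r.2 then (1:ℝ) else 0) - Sv μ r.1.1| ≤ 1 := by
      nlinarith [abs_nonneg ((if r.1.1 < r.1.2 then (1:ℝ) else 0) - Sv μ r.1.1),
        abs_nonneg ((if r.1.1 < r.2 then (1:ℝ) else 0) - Sv μ r.1.1)]
    nlinarith [sq_nonneg r.1.1]
  rw [integral_prod _ hHint]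
  have hinner : ∀ p : ℝ × ℝ, ∫ t, H (p, t) ∂μ = 0 := by
    intro p
    have hre : (fun t => H (p, t)) = fun t =>
        (p.1 ^ 2 * ((if p.1 < p.2 then (1:ℝ) else 0) - Sv μ p.1))
          * ((if p.1 < t then (1:ℝ) else 0) - Sv μ p.1) := by
      ext t
      simp only [hHdef]
      ring
    rw [hre, integral_const_mul _ _, integral_sub (ind_integrable μ p.1) (integrable_const _),
      ind_integral, integral_const]
    simp
  calc ∫ p, ∫ t, H (p, t) ∂μ ∂(μ.prod μ) = ∫ p, (0:ℝ) ∂(μ.prod μ) :=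
        integral_congr_ae (Filter.Eventually.of_forall hinner)
    _ = 0 := integral_zero _ _

lemma diag_bound (hXm : ∀ i, Measurable (X i)) (hdist : ∀ i, Measure.map (X i) P = μ)
    (h2 : Integrable (fun t => t ^ 2) μ) {i j : ℕ} :
    ∫ ω, (X i ω) ^ 2 * (((if X i ω < X j ω then (1:ℝ) else 0) - Sv μ (X i ω))
        * ((if X i ω < X j ω then (1:ℝ) else 0) - Sv μ (X i ω))) ∂P ≤ ∫ t, t ^ 2 ∂μ := by
  have hsq := sq_int hXm hdist h2 i
  have hZm : Measurable (fun ω => (if X i ω < X j ω then (1:ℝ) else 0) - Sv μ (X i ω)) :=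
    (measurable_const.ite (measurableSet_lt (hXm i) (hXm j)) measurable_const).sub
      ((Sv_meas μ).comp (hXm i))
  have hptw : ∀ ω, (X i ω) ^ 2 * (((if X i ω < X j ω then (1:ℝ) else 0) - Sv μ (X i ω))
      * ((if X i ω < X j ω then (1:ℝ) else 0) - Sv μ (X i ω))) ≤ (X i ω) ^ 2 := by
    intro ω
    have hz := Z_abs_le (X i ω < X j ω) (Sv_nonneg μ (X i ω)) (Sv_le_one μ (X i ω))
    nlinarith [sq_nonneg (X i ω), zz_le_one hz]
  have hint : Integrable (fun ω => (X i ω) ^ 2 *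
      (((if X i ω < X j ω then (1:ℝ) else 0) - Sv μ (X i ω))
        * ((if X i ω < X j ω then (1:ℝ) else 0) - Sv μ (X i ω)))) P := by
    refine hsq.mono' (((hXm i).pow_const 2).mul (hZm.mul hZm)).aestronglyMeasurable ?_
    filter_upwards with ω
    have hz := Z_abs_le (X i ω < X j ω) (Sv_nonneg μ (X i ω)) (Sv_le_one μ (X i ω))
    rw [Real.norm_eq_abs, abs_mul, abs_mul, abs_of_nonneg (sq_nonneg (X i ω))]
    have habs := abs_nonneg ((if X i ω < X j ω then (1:ℝ) else 0) - Sv μ (X i ω))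
    have h1 : |(if X i ω < X j ω then (1:ℝ) else 0) - Sv μ (X i ω)|
        * |(if X i ω < X j ω then (1:ℝ) else 0) - Sv μ (X i ω)| ≤ 1 :=
      mul_le_one₀ hz habs hz
    nlinarith [sq_nonneg (X i ω)]
  calc ∫ ω, (X i ω) ^ 2 * (((if X i ω < X j ω then (1:ℝ) else 0) - Sv μ (X i ω))
        * ((if X i ω < X j ω then (1:ℝ) else 0) - Sv μ (X i ω))) ∂P
      ≤ ∫ ω, (X i ω) ^ 2 ∂P := integral_mono hint hsq hptw
    _ = ∫ t, t ^ 2 ∂μ := sq_val hXm hdist i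

end Prob2

section Prob3

lemma amgm_div {a d : ℝ} (ha : 0 < a) : |d| ≤ (a * (d * d) + 1 / a) / 2 := by
  rw [le_div_iff₀ (by norm_num : (0:ℝ) < 2), ← sub_nonneg]
  have h1 : a * (d * d) + 1 / a - |d| * 2 = (a * |d| - 1) ^ 2 / a := by
    rw [← abs_mul_abs_self d]
    field_simp
    ring_nf
  rw [h1]
  positivity

variable {Ω : Type*} [MeasurableSpace Ω] {P : Measure Ω} [IsProbabilityMeasure P]
  {X : ℕ → Ω → ℝ} {μ : Measure ℝ} [IsProbabilityMeasure μ] [NullSingletonClass μ]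

lemma Di_bound (hXm : ∀ i, Measurable (X i))
    (hindep : iIndepFun X P)
    (hdist : ∀ i, Measure.map (X i) P = μ)
    (h2 : Integrable (fun t => t ^ 2) μ)
    {n i : ℕ} (hn : 2 ≤ n) (hi : i < n) :
    Integrable (fun ω => (X i ω) ^ 2 *
      ((∑ j ∈ range n, if X i ω < X j ω then (1:ℝ) else 0) / ((n:ℝ) - 1)
        - Sv μ (X i ω))) P ∧
    ∫ ω, (X i ω) ^ 2 *
      |(∑ j ∈ range n, if X i ω < X j ω then (1:ℝ) else 0) / ((n:ℝ) - 1)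
        - Sv μ (X i ω)| ∂P
      ≤ (∫ t, t ^ 2 ∂μ) / Real.sqrt ((n:ℝ) - 1) := by
  set q := ∫ t, t ^ 2 ∂μ with hq
  have hq0 : 0 ≤ q := integral_nonneg fun t => sq_nonneg t
  have hn2 : (2:ℝ) ≤ (n:ℝ) := by exact_mod_cast hn
  have hpos : (0:ℝ) < (n:ℝ) - 1 := by linarith
  set a := Real.sqrt ((n:ℝ) - 1) with hadef
  have ha : 0 < a := Real.sqrt_pos.mpr hpos
  have ha2 : a * a = (n:ℝ) - 1 := Real.mul_self_sqrt hpos.le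
  set s : Finset ℕ := (range n).erase i with hs
  have hcard : (s.card : ℝ) = (n:ℝ) - 1 := by
    rw [hs, Finset.card_erase_of_mem (Finset.mem_range.mpr hi), Finset.card_range,
      Nat.cast_sub (by omega), Nat.cast_one]
  set Z : ℕ → Ω → ℝ :=
    fun j ω => (if X i ω < X j ω then (1:ℝ) else 0) - Sv μ (X i ω) with hZ
  set T : Ω → ℝ := fun ω => ∑ j ∈ s, Z j ω with hT
  have hDeq : ∀ ω, (∑ j ∈ range n, if X i ω < X j ω then (1:ℝ) else 0) / ((n:ℝ) - 1)
      - Sv μ (X i ω) = T ω / ((n:ℝ) - 1) := by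
    intro ω
    have hzero : (if X i ω < X i ω then (1:ℝ) else 0) = 0 := if_neg (lt_irrefl _)
    have hsum : ∑ j ∈ s, (if X i ω < X j ω then (1:ℝ) else 0)
        = ∑ j ∈ range n, (if X i ω < X j ω then (1:ℝ) else 0) :=
      Finset.sum_erase _ hzero
    have hTval : T ω = (∑ j ∈ range n, if X i ω < X j ω then (1:ℝ) else 0)
        - ((n:ℝ) - 1) * Sv μ (X i ω) := by
      rw [hT]
      simp only [hZ]
      rw [Finset.sum_sub_distrib, hsum, Finset.sum_const, nsmul_eq_mul, hcard]
    rw [hTval]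
    field_simp
  have hZm : ∀ j, Measurable (Z j) := fun j =>
    (measurable_const.ite (measurableSet_lt (hXm i) (hXm j)) measurable_const).sub
      ((Sv_meas μ).comp (hXm i))
  have hTm : Measurable T := Finset.measurable_sum s (fun j _ => hZm j)
  have hZle : ∀ j ω, |Z j ω| ≤ 1 := fun j ω =>
    Z_abs_le _ (Sv_nonneg _ _) (Sv_le_one _ _)
  have hTle : ∀ ω, |T ω| ≤ (n:ℝ) - 1 := by
    intro ω
    calc |T ω| ≤ ∑ j ∈ s, |Z j ω| := Finset.abs_sum_le_sum_abs _ _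
      _ ≤ ∑ j ∈ s, 1 := Finset.sum_le_sum fun j _ => hZle j ω
      _ = (n:ℝ) - 1 := by rw [Finset.sum_const, nsmul_eq_mul, mul_one, hcard]
  have hsq := sq_int hXm hdist h2 i
  have hintTT : Integrable (fun ω => (X i ω) ^ 2 * (T ω * T ω)) P := by
    refine (hsq.const_mul (((n:ℝ) - 1) * ((n:ℝ) - 1))).mono'
      (((hXm i).pow_const 2).mul (hTm.mul hTm)).aestronglyMeasurable ?_
    filter_upwards with ω
    rw [Real.norm_eq_abs, abs_mul, abs_mul, abs_of_nonneg (sq_nonneg _)]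
    have h1 : |T ω| * |T ω| ≤ (((n:ℝ) - 1) * (((n:ℝ) - 1))) :=
      mul_le_mul (hTle ω) (hTle ω) (abs_nonneg _) hpos.le
    nlinarith [sq_nonneg (X i ω)]
  have hvar : ∫ ω, (X i ω) ^ 2 * (T ω * T ω) ∂P ≤ ((n:ℝ) - 1) * q := by
    have hexp : ∀ ω, (X i ω) ^ 2 * (T ω * T ω)
        = ∑ j ∈ s, ∑ k ∈ s, (X i ω) ^ 2 * (Z j ω * Z k ω) := by
      intro ω
      rw [hT, Finset.sum_mul_sum, Finset.mul_sum]
      exact Finset.sum_congr rfl fun j _ => by rw [Finset.mul_sum]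
    have hterm_int : ∀ j k : ℕ, Integrable (fun ω => (X i ω) ^ 2 * (Z j ω * Z k ω)) P := by
      intro j k
      refine hsq.mono'
        (((hXm i).pow_const 2).mul ((hZm j).mul (hZm k))).aestronglyMeasurable ?_
      filter_upwards with ω
      rw [Real.norm_eq_abs, abs_mul, abs_mul, abs_of_nonneg (sq_nonneg _)]
      have h1 : |Z j ω| * |Z k ω| ≤ 1 :=
        mul_le_one₀ (hZle j ω) (abs_nonneg _) (hZle k ω)
      nlinarith [sq_nonneg (X i ω)]
    have hswap : ∫ ω, (X i ω) ^ 2 * (T ω * T ω) ∂P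
        = ∑ j ∈ s, ∑ k ∈ s, ∫ ω, (X i ω) ^ 2 * (Z j ω * Z k ω) ∂P := by
      rw [integral_congr_ae (Filter.Eventually.of_forall hexp),
        integral_finset_sum _ (fun j _ => integrable_finset_sum _ (fun k _ => hterm_int j k))]
      exact Finset.sum_congr rfl fun j _ => integral_finset_sum _ (fun k _ => hterm_int j k)
    rw [hswap]
    have hrow : ∀ j ∈ s, ∑ k ∈ s, ∫ ω, (X i ω) ^ 2 * (Z j ω * Z k ω) ∂P ≤ q := by
      intro j hj
      have hji : j ≠ i := Finset.ne_of_mem_erase hj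
      have hsplit : ∑ k ∈ s, ∫ ω, (X i ω) ^ 2 * (Z j ω * Z k ω) ∂P
          = ∫ ω, (X i ω) ^ 2 * (Z j ω * Z j ω) ∂P
            + ∑ k ∈ s.erase j, ∫ ω, (X i ω) ^ 2 * (Z j ω * Z k ω) ∂P :=
        (Finset.add_sum_erase s _ hj).symm
      have hzero : ∀ k ∈ s.erase j, ∫ ω, (X i ω) ^ 2 * (Z j ω * Z k ω) ∂P = 0 := by
        intro k hk
        have hkj : k ≠ j := Finset.ne_of_mem_erase hk
        have hki : k ≠ i := Finset.ne_of_mem_erase (Finset.mem_of_mem_erase hk)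
        simp only [hZ]
        exact cross_zero hXm hindep hdist h2 hji.symm hki.symm hkj.symm
      rw [hsplit, Finset.sum_eq_zero hzero, add_zero]
      simp only [hZ, hq]
      exact diag_bound hXm hdist h2
    calc ∑ j ∈ s, ∑ k ∈ s, ∫ ω, (X i ω) ^ 2 * (Z j ω * Z k ω) ∂P
        ≤ ∑ _j ∈ s, q := Finset.sum_le_sum hrow
      _ = ((n:ℝ) - 1) * q := by rw [Finset.sum_const, nsmul_eq_mul, hcard]
  have hsumm : Measurable (fun ω => (∑ j ∈ range n, if X i ω < X j ω then (1:ℝ) else 0)) :=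
    Finset.measurable_sum (range n) (fun j _ =>
      measurable_const.ite (measurableSet_lt (hXm i) (hXm j)) measurable_const)
  have hDm : Measurable (fun ω =>
      (∑ j ∈ range n, if X i ω < X j ω then (1:ℝ) else 0) / ((n:ℝ) - 1)
        - Sv μ (X i ω)) :=
    (hsumm.div_const _).sub ((Sv_meas μ).comp (hXm i))
  have hDle : ∀ ω, |(∑ j ∈ range n, if X i ω < X j ω then (1:ℝ) else 0) / ((n:ℝ) - 1)
      - Sv μ (X i ω)| ≤ 1 := by
    intro ω
    rw [hDeq ω, abs_div, abs_of_pos hpos]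
    exact div_le_one_of_le₀ (hTle ω) hpos.le
  constructor
  · refine hsq.mono' (((hXm i).pow_const 2).mul hDm).aestronglyMeasurable ?_
    filter_upwards with ω
    rw [Real.norm_eq_abs, abs_mul, abs_of_nonneg (sq_nonneg _)]
    nlinarith [sq_nonneg (X i ω), hDle ω,
      abs_nonneg ((∑ j ∈ range n, if X i ω < X j ω then (1:ℝ) else 0) / ((n:ℝ) - 1)
        - Sv μ (X i ω))]
  · set c := (n:ℝ) - 1 with hc
    have hptw : ∀ ω, (X i ω) ^ 2 *
        |(∑ j ∈ range n, if X i ω < X j ω then (1:ℝ) else 0) / c - Sv μ (X i ω)|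
          ≤ (a * ((X i ω) ^ 2 * (T ω * T ω)) / (c * c) + (X i ω) ^ 2 / a) / 2 := by
      intro ω
      rw [hDeq ω]
      have hd : |T ω / c| ≤ (a * ((T ω / c) * (T ω / c)) + 1 / a) / 2 := amgm_div ha
      have hx := sq_nonneg (X i ω)
      have hexpand : (T ω / c) * (T ω / c) = (T ω * T ω) / (c * c) := by
        field_simp
      rw [hexpand] at hd
      calc (X i ω) ^ 2 * |T ω / c|
          ≤ (X i ω) ^ 2 * ((a * ((T ω * T ω) / (c * c)) + 1 / a) / 2) :=
            mul_le_mul_of_nonneg_left hd hx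
        _ = (a * ((X i ω) ^ 2 * (T ω * T ω)) / (c * c) + (X i ω) ^ 2 / a) / 2 := by
            ring
    have hlhs_int : Integrable (fun ω => (X i ω) ^ 2 *
        |(∑ j ∈ range n, if X i ω < X j ω then (1:ℝ) else 0) / c - Sv μ (X i ω)|) P := by
      refine hsq.mono' (((hXm i).pow_const 2).mul hDm.abs).aestronglyMeasurable ?_
      filter_upwards with ω
      rw [Real.norm_eq_abs, abs_mul, abs_of_nonneg (sq_nonneg _), abs_abs]
      nlinarith [sq_nonneg (X i ω), hDle ω,
        abs_nonneg ((∑ j ∈ range n, if X i ω < X j ω then (1:ℝ) else 0) / c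
          - Sv μ (X i ω))]
    have hrhs_int : Integrable (fun ω =>
        (a * ((X i ω) ^ 2 * (T ω * T ω)) / (c * c) + (X i ω) ^ 2 / a) / 2) P :=
      ((((hintTT.const_mul a).div_const (c * c)).add (hsq.div_const a)).div_const 2)
    calc ∫ ω, (X i ω) ^ 2 *
          |(∑ j ∈ range n, if X i ω < X j ω then (1:ℝ) else 0) / c - Sv μ (X i ω)| ∂P
        ≤ ∫ ω, (a * ((X i ω) ^ 2 * (T ω * T ω)) / (c * c) + (X i ω) ^ 2 / a) / 2 ∂P :=
          integral_mono hlhs_int hrhs_int hptw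
      _ = (a * (∫ ω, (X i ω) ^ 2 * (T ω * T ω) ∂P) / (c * c)
            + (∫ ω, (X i ω) ^ 2 ∂P) / a) / 2 := by
          rw [integral_div, integral_add ((hintTT.const_mul a).div_const (c * c))
            (hsq.div_const a), integral_div, integral_div, integral_const_mul]
      _ ≤ (a * (c * q) / (c * c) + q / a) / 2 := by
          rw [sq_val hXm hdist i, ← hq]
          have h2' : a * (∫ ω, (X i ω) ^ 2 * (T ω * T ω) ∂P) / (c * c)
              ≤ a * (c * q) / (c * c) := by
            gcongr
          linarith [h2']
      _ = q / a := by
          rw [← ha2]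
          field_simp
          ring

lemma R_L1 (hXm : ∀ i, Measurable (X i))
    (hindep : iIndepFun X P)
    (hdist : ∀ i, Measure.map (X i) P = μ)
    (h2 : Integrable (fun t => t ^ 2) μ)
    {n : ℕ} (hn : 2 ≤ n) :
    Integrable (fun ω => (∑ i ∈ range n, (X i ω) ^ 2 *
      ((∑ j ∈ range n, if X i ω < X j ω then (1:ℝ) else 0) / ((n:ℝ) - 1)
        - Sv μ (X i ω))) / (n:ℝ)) P ∧
    ∫ ω, |(∑ i ∈ range n, (X i ω) ^ 2 *
      ((∑ j ∈ range n, if X i ω < X j ω then (1:ℝ) else 0) / ((n:ℝ) - 1)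
        - Sv μ (X i ω))) / (n:ℝ)| ∂P ≤ (∫ t, t ^ 2 ∂μ) / Real.sqrt ((n:ℝ) - 1) := by
  have hn0 : (0:ℝ) < (n:ℝ) := by
    have : (2:ℝ) ≤ (n:ℝ) := by exact_mod_cast hn
    linarith
  have hint : Integrable (fun ω => ∑ i ∈ range n, (X i ω) ^ 2 *
      ((∑ j ∈ range n, if X i ω < X j ω then (1:ℝ) else 0) / ((n:ℝ) - 1)
        - Sv μ (X i ω))) P :=
    integrable_finset_sum _ (fun i hi =>
      (Di_bound hXm hindep hdist h2 hn (Finset.mem_range.mp hi)).1)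
  refine ⟨hint.div_const _, ?_⟩
  have habs_int : ∀ i ∈ range n, Integrable (fun ω => (X i ω) ^ 2 *
      |(∑ j ∈ range n, if X i ω < X j ω then (1:ℝ) else 0) / ((n:ℝ) - 1)
        - Sv μ (X i ω)|) P := by
    intro i hi
    have h := (Di_bound hXm hindep hdist h2 hn (Finset.mem_range.mp hi)).1.abs
    refine h.congr (Filter.Eventually.of_forall fun ω => ?_)
    simp only [abs_mul]
    rw [abs_of_nonneg (sq_nonneg (X i ω))]
  have hrhs_int : Integrable (fun ω => (∑ i ∈ range n, (X i ω) ^ 2 *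
      |(∑ j ∈ range n, if X i ω < X j ω then (1:ℝ) else 0) / ((n:ℝ) - 1)
        - Sv μ (X i ω)|) / (n:ℝ)) P :=
    (integrable_finset_sum _ habs_int).div_const _
  have hptw : ∀ ω, |(∑ i ∈ range n, (X i ω) ^ 2 *
      ((∑ j ∈ range n, if X i ω < X j ω then (1:ℝ) else 0) / ((n:ℝ) - 1)
        - Sv μ (X i ω))) / (n:ℝ)|
      ≤ (∑ i ∈ range n, (X i ω) ^ 2 *
        |(∑ j ∈ range n, if X i ω < X j ω then (1:ℝ) else 0) / ((n:ℝ) - 1)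
          - Sv μ (X i ω)|) / (n:ℝ) := by
    intro ω
    rw [abs_div, abs_of_pos hn0]
    gcongr
    calc |∑ i ∈ range n, (X i ω) ^ 2 *
        ((∑ j ∈ range n, if X i ω < X j ω then (1:ℝ) else 0) / ((n:ℝ) - 1)
          - Sv μ (X i ω))|
        ≤ ∑ i ∈ range n, |(X i ω) ^ 2 *
          ((∑ j ∈ range n, if X i ω < X j ω then (1:ℝ) else 0) / ((n:ℝ) - 1)
            - Sv μ (X i ω))| := Finset.abs_sum_le_sum_abs _ _
      _ = ∑ i ∈ range n, (X i ω) ^ 2 *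
          |(∑ j ∈ range n, if X i ω < X j ω then (1:ℝ) else 0) / ((n:ℝ) - 1)
            - Sv μ (X i ω)| := by
          exact Finset.sum_congr rfl fun i _ => by
            rw [abs_mul, abs_of_nonneg (sq_nonneg _)]
  calc ∫ ω, |(∑ i ∈ range n, (X i ω) ^ 2 *
      ((∑ j ∈ range n, if X i ω < X j ω then (1:ℝ) else 0) / ((n:ℝ) - 1)
        - Sv μ (X i ω))) / (n:ℝ)| ∂P
      ≤ ∫ ω, (∑ i ∈ range n, (X i ω) ^ 2 *
        |(∑ j ∈ range n, if X i ω < X j ω then (1:ℝ) else 0) / ((n:ℝ) - 1)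
          - Sv μ (X i ω)|) / (n:ℝ) ∂P :=
        integral_mono (hint.div_const _).abs hrhs_int hptw
    _ = (∑ i ∈ range n, ∫ ω, (X i ω) ^ 2 *
        |(∑ j ∈ range n, if X i ω < X j ω then (1:ℝ) else 0) / ((n:ℝ) - 1)
          - Sv μ (X i ω)| ∂P) / (n:ℝ) := by
        rw [integral_div, integral_finset_sum _ habs_int]
    _ ≤ (∑ _i ∈ range n, (∫ t, t ^ 2 ∂μ) / Real.sqrt ((n:ℝ) - 1)) / (n:ℝ) := by
        gcongr with i hi
        exact (Di_bound hXm hindep hdist h2 hn (Finset.mem_range.mp hi)).2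
    _ = (∫ t, t ^ 2 ∂μ) / Real.sqrt ((n:ℝ) - 1) := by
        rw [Finset.sum_const, Finset.card_range, nsmul_eq_mul]
        exact mul_div_cancel_left₀ _ hn0.ne'

lemma sqrt_nsub_atTop : Filter.Tendsto (fun n : ℕ => Real.sqrt ((n:ℝ) - 1))
    Filter.atTop Filter.atTop := by
  rw [Filter.tendsto_atTop_atTop]
  intro b
  obtain ⟨N, hN⟩ := exists_nat_ge (b ^ 2 + 1)
  refine ⟨N, fun n hn => ?_⟩
  have h1 : b ^ 2 + 1 ≤ (n:ℝ) := le_trans hN (by exact_mod_cast hn)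
  rcases le_or_gt b 0 with hb | hb
  · exact hb.trans (Real.sqrt_nonneg _)
  · rw [show b = Real.sqrt (b ^ 2) from (Real.sqrt_sq hb.le).symm]
    exact Real.sqrt_le_sqrt (by linarith)

lemma R_tendsto (hXm : ∀ i, Measurable (X i))
    (hindep : iIndepFun X P)
    (hdist : ∀ i, Measure.map (X i) P = μ)
    (h2 : Integrable (fun t => t ^ 2) μ) :
    TendstoInMeasure P (fun (n : ℕ) ω => (∑ i ∈ range n, (X i ω) ^ 2 *
      ((∑ j ∈ range n, if X i ω < X j ω then (1:ℝ) else 0) / ((n:ℝ) - 1)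
        - Sv μ (X i ω))) / (n:ℝ)) Filter.atTop (fun _ => (0:ℝ)) := by
  have hm : ∀ n : ℕ, Measurable (fun ω => (∑ i ∈ range n, (X i ω) ^ 2 *
      ((∑ j ∈ range n, if X i ω < X j ω then (1:ℝ) else 0) / ((n:ℝ) - 1)
        - Sv μ (X i ω))) / (n:ℝ)) := by
    intro n
    refine Measurable.div_const (Finset.measurable_sum _ fun i _ => ?_) _
    exact ((hXm i).pow_const 2).mul
      (((Finset.measurable_sum _ fun j _ => measurable_const.ite
          (measurableSet_lt (hXm i) (hXm j)) measurable_const).div_const _).sub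
        ((Sv_meas μ).comp (hXm i)))
  refine tendstoInMeasure_of_tendsto_eLpNorm one_ne_zero
    (fun n => (hm n).aestronglyMeasurable) aestronglyMeasurable_const ?_
  have hfg : ∀ n : ℕ, ((fun ω => (∑ i ∈ range n, (X i ω) ^ 2 *
      ((∑ j ∈ range n, if X i ω < X j ω then (1:ℝ) else 0) / ((n:ℝ) - 1)
        - Sv μ (X i ω))) / (n:ℝ)) - (fun _ => (0:ℝ)))
      = fun ω => (∑ i ∈ range n, (X i ω) ^ 2 *
      ((∑ j ∈ range n, if X i ω < X j ω then (1:ℝ) else 0) / ((n:ℝ) - 1)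
        - Sv μ (X i ω))) / (n:ℝ) := by
    intro n; funext ω; simp
  simp only [hfg]
  have hub : Filter.Tendsto (fun n : ℕ =>
      ENNReal.ofReal ((∫ t, t ^ 2 ∂μ) / Real.sqrt ((n:ℝ) - 1)))
      Filter.atTop (𝓝 0) := by
    rw [← ENNReal.ofReal_zero]
    exact ENNReal.tendsto_ofReal
      (Filter.Tendsto.div_atTop tendsto_const_nhds sqrt_nsub_atTop)
  refine tendsto_of_tendsto_of_tendsto_of_le_of_le' tendsto_const_nhds hub
    (Filter.Eventually.of_forall fun n => zero_le) ?_
  filter_upwards [Filter.eventually_ge_atTop 2] with n hn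
  have hRL := R_L1 hXm hindep hdist h2 hn
  rw [eLpNorm_one_eq_lintegral_enorm, ← ofReal_integral_norm_eq_lintegral_enorm hRL.1]
  refine ENNReal.ofReal_le_ofReal ?_
  calc ∫ ω, ‖(∑ i ∈ range n, (X i ω) ^ 2 *
      ((∑ j ∈ range n, if X i ω < X j ω then (1:ℝ) else 0) / ((n:ℝ) - 1)
        - Sv μ (X i ω))) / (n:ℝ)‖ ∂P
      = ∫ ω, |(∑ i ∈ range n, (X i ω) ^ 2 *
      ((∑ j ∈ range n, if X i ω < X j ω then (1:ℝ) else 0) / ((n:ℝ) - 1)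
        - Sv μ (X i ω))) / (n:ℝ)| ∂P := by simp only [Real.norm_eq_abs]
    _ ≤ (∫ t, t ^ 2 ∂μ) / Real.sqrt ((n:ℝ) - 1) := hRL.2

lemma tendsto_inv_nsub : Filter.Tendsto (fun n : ℕ => 1 / ((n:ℝ) - 1))
    Filter.atTop (𝓝 0) := by
  have h1 : Filter.Tendsto (fun n : ℕ => (n:ℝ) - 1) Filter.atTop Filter.atTop :=
    (Filter.tendsto_atTop_add_const_right _ (-1)
      (tendsto_natCast_atTop_atTop (R := ℝ))).congr (fun n => by ring)
  exact Filter.Tendsto.div_atTop tendsto_const_nhds h1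

lemma tendsto_nsub_ratio : Filter.Tendsto (fun n : ℕ => (n:ℝ) / ((n:ℝ) - 1))
    Filter.atTop (𝓝 1) := by
  have hone : Filter.Tendsto (fun _ : ℕ => (1:ℝ)) Filter.atTop (𝓝 1) :=
    tendsto_const_nhds
  have h := hone.add tendsto_inv_nsub
  rw [add_zero] at h
  refine Filter.Tendsto.congr' ?_ h
  filter_upwards [Filter.eventually_ge_atTop 2] with n hn
  have h2 : (2:ℝ) ≤ (n:ℝ) := by exact_mod_cast hn
  have hn1 : (n:ℝ) - 1 ≠ 0 := by linarith
  field_simp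
  ring

lemma g_tendsto_ae (hXm : ∀ i, Measurable (X i))
    (hindep : iIndepFun X P)
    (hdist : ∀ i, Measure.map (X i) P = μ)
    (h2 : Integrable (fun t => t ^ 2) μ) :
    ∀ᵐ ω ∂P, Filter.Tendsto (fun n : ℕ =>
      (∑ i ∈ range n, (X i ω) ^ 2 * Sv μ (X i ω)) / (n:ℝ)
        - ((∑ i ∈ range n, X i ω) ^ 2 - ∑ i ∈ range n, (X i ω) ^ 2)
            / (2 * (n:ℝ) * ((n:ℝ) - 1)) - 1 / 2)
      Filter.atTop
      (𝓝 ((∫ x, x ^ 2 * Sv μ x ∂μ) - (∫ x, x ∂μ) ^ 2 / 2 - 1 / 2)) := by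
  have hphi_m : Measurable (fun x : ℝ => x ^ 2 * Sv μ x) :=
    (measurable_id'.pow_const 2).mul (Sv_meas μ)
  have hphi_int : Integrable (fun x : ℝ => x ^ 2 * Sv μ x) μ := by
    refine h2.mono' hphi_m.aestronglyMeasurable ?_
    filter_upwards with x
    rw [Real.norm_eq_abs, abs_mul, abs_of_nonneg (sq_nonneg x)]
    nlinarith [sq_nonneg x, Sv_nonneg μ x, Sv_le_one μ x,
      abs_of_nonneg (Sv_nonneg μ x)]
  filter_upwards [slln_comp hXm hindep hdist _ hphi_m hphi_int,
    slln_comp hXm hindep hdist _ measurable_id' (hid μ h2),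
    slln_comp hXm hindep hdist _ (measurable_id'.pow_const 2) h2] with ω hφ hm hq
  have hmid : Filter.Tendsto (fun n : ℕ =>
      (((∑ i ∈ range n, X i ω) / (n:ℝ)) ^ 2 * ((n:ℝ) / ((n:ℝ) - 1))
        - ((∑ i ∈ range n, (X i ω) ^ 2) / (n:ℝ)) * (1 / ((n:ℝ) - 1))) / 2)
      Filter.atTop (𝓝 (((∫ x, x ∂μ) ^ 2 * 1 - (∫ x, x ^ 2 ∂μ) * 0) / 2)) :=
    (((hm.pow 2).mul tendsto_nsub_ratio).sub (hq.mul tendsto_inv_nsub)).div_const 2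
  have hhalf : Filter.Tendsto (fun _ : ℕ => (1/2:ℝ)) Filter.atTop (𝓝 (1/2:ℝ)) :=
    tendsto_const_nhds
  have hmain := (hφ.sub hmid).sub hhalf
  have hval : (∫ x, x ^ 2 * Sv μ x ∂μ)
      - ((∫ x, x ∂μ) ^ 2 * 1 - (∫ x, x ^ 2 ∂μ) * 0) / 2 - 1 / 2
      = (∫ x, x ^ 2 * Sv μ x ∂μ) - (∫ x, x ∂μ) ^ 2 / 2 - 1 / 2 := by ring
  rw [hval] at hmain
  refine Filter.Tendsto.congr' ?_ hmain
  filter_upwards [Filter.eventually_ge_atTop 2] with n hn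
  have h2r : (2:ℝ) ≤ (n:ℝ) := by exact_mod_cast hn
  have hn0 : (n:ℝ) ≠ 0 := by linarith
  have hn1 : (n:ℝ) - 1 ≠ 0 := by linarith
  field_simp

lemma decomp_ae (hXm : ∀ i, Measurable (X i))
    (hindep : iIndepFun X P)
    (hdist : ∀ i, Measure.map (X i) P = μ) :
    ∀ᵐ ω ∂P, ∀ n : ℕ, 2 ≤ n →
      (2 / ((n:ℝ) * ((n:ℝ) - 1)) * (∑ i ∈ range n, ∑ j ∈ range i,
          (1 / 2) * (min (X i ω) (X j ω) ^ 2 - X i ω * X j ω)) - 1 / 2)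
        = ((∑ i ∈ range n, (X i ω) ^ 2 * Sv μ (X i ω)) / (n:ℝ)
            - ((∑ i ∈ range n, X i ω) ^ 2 - ∑ i ∈ range n, (X i ω) ^ 2)
                / (2 * (n:ℝ) * ((n:ℝ) - 1)) - 1 / 2)
          + (∑ i ∈ range n, (X i ω) ^ 2 *
              ((∑ j ∈ range n, if X i ω < X j ω then (1:ℝ) else 0) / ((n:ℝ) - 1)
                - Sv μ (X i ω))) / (n:ℝ) := by
  filter_upwards [ties hXm hindep hdist] with ω hω n hn
  have hpull : ∑ i ∈ range n, ∑ j ∈ range i,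
      (1 / 2 : ℝ) * (min (X i ω) (X j ω) ^ 2 - X i ω * X j ω)
      = (1 / 2 : ℝ) * ∑ i ∈ range n, ∑ j ∈ range i,
        (min (X i ω) (X j ω) ^ 2 - X i ω * X j ω) := by
    rw [Finset.mul_sum]
    exact Finset.sum_congr rfl fun i _ => (Finset.mul_sum _ _ _).symm
  rw [hpull, pairs_identity (fun i => X i ω) (fun i j h => hω i j h) n]
  have hRsum : ∑ i ∈ range n, (X i ω) ^ 2 *
      ((∑ j ∈ range n, if X i ω < X j ω then (1:ℝ) else 0) / ((n:ℝ) - 1)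
        - Sv μ (X i ω))
      = (∑ i ∈ range n, (X i ω) ^ 2 *
          (∑ j ∈ range n, if X i ω < X j ω then (1:ℝ) else 0)) / ((n:ℝ) - 1)
        - ∑ i ∈ range n, (X i ω) ^ 2 * Sv μ (X i ω) := by
    rw [Finset.sum_div, ← Finset.sum_sub_distrib]
    exact Finset.sum_congr rfl fun i _ => by ring
  rw [hRsum]
  have h2r : (2:ℝ) ≤ (n:ℝ) := by exact_mod_cast hn
  have hn0 : (n:ℝ) ≠ 0 := by linarith
  have hn1 : (n:ℝ) - 1 ≠ 0 := by linarith
  field_simp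
  ring
end Prob3

/-- Theorem 2 of the paper: for an i.i.d. sample `X₁, X₂, …` from an atomless law `μ` on `ℝ`
with finite second moment and cdf `F`, the U-statistic
`Δ̂ₙ = (2/(n(n-1))) Σ_{j<i} (1/2)((min Xᵢ Xⱼ)² - Xᵢ Xⱼ) - 1/2` converges in probability to
the departure measure `Δ(F) = ∫ (e_X(x) - F(x)) dμ(x)`. -/
theorem uStatistic_consistent
    {Ω : Type*} [MeasurableSpace Ω] (P : Measure Ω) [IsProbabilityMeasure P]
    (X : ℕ → Ω → ℝ) (hXm : ∀ i, Measurable (X i))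
    (hindep : iIndepFun X P)
    (μ : Measure ℝ) [IsProbabilityMeasure μ] [NullSingletonClass μ]
    (hdist : ∀ i, Measure.map (X i) P = μ)
    (h2 : Integrable (fun t => t ^ 2) μ) :
    TendstoInMeasure P
      (fun (n : ℕ) (ω : Ω) =>
        (2 / (n * (n - 1) : ℝ)) *
          (∑ i ∈ Finset.range n, ∑ j ∈ Finset.range i,
            (1 / 2) * ((min (X i ω) (X j ω)) ^ 2 - X i ω * X j ω)) - 1 / 2)
      Filter.atTop
      (fun _ =>
        ∫ x, ((∫ t in Set.Iic x, t * (t - x) ∂μ) - (μ (Set.Iic x)).toReal) ∂μ) := by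
  have hθ : (fun _ : Ω => ∫ x, ((∫ t in Set.Iic x, t * (t - x) ∂μ)
        - (μ (Set.Iic x)).toReal) ∂μ)
      = (fun _ : Ω => ((∫ x, x ^ 2 * Sv μ x ∂μ) - (∫ x, x ∂μ) ^ 2 / 2 - 1 / 2) + 0) := by
    funext ω
    rw [add_zero, theta_eq μ h2]
    rfl
  have hgm : ∀ n : ℕ, AEStronglyMeasurable (fun ω =>
      (∑ i ∈ range n, (X i ω) ^ 2 * Sv μ (X i ω)) / (n:ℝ)
        - ((∑ i ∈ range n, X i ω) ^ 2 - ∑ i ∈ range n, (X i ω) ^ 2)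
            / (2 * (n:ℝ) * ((n:ℝ) - 1)) - 1 / 2) P := by
    intro n
    refine Measurable.aestronglyMeasurable ?_
    exact ((((Finset.measurable_sum _ fun i _ =>
          ((hXm i).pow_const 2).mul ((Sv_meas μ).comp (hXm i))).div_const _).sub
        ((((Finset.measurable_sum _ fun i _ => hXm i).pow_const 2).sub
          (Finset.measurable_sum _ fun i _ => (hXm i).pow_const 2)).div_const _)).sub
      measurable_const)
  have h1 : TendstoInMeasure P (fun (n : ℕ) ω =>
      (∑ i ∈ range n, (X i ω) ^ 2 * Sv μ (X i ω)) / (n:ℝ)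
        - ((∑ i ∈ range n, X i ω) ^ 2 - ∑ i ∈ range n, (X i ω) ^ 2)
            / (2 * (n:ℝ) * ((n:ℝ) - 1)) - 1 / 2)
      Filter.atTop
      (fun _ => (∫ x, x ^ 2 * Sv μ x ∂μ) - (∫ x, x ∂μ) ^ 2 / 2 - 1 / 2) :=
    tendstoInMeasure_of_tendsto_ae hgm (g_tendsto_ae hXm hindep hdist h2)
  have hR := R_tendsto hXm hindep hdist h2
  have hsum := TIM_add P h1 hR
  refine TendstoInMeasure.congr' ?_ ?_ hsum
  · filter_upwards [Filter.eventually_ge_atTop 2] with n hn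
    filter_upwards [decomp_ae hXm hindep hdist] with ω hω
    exact (hω n hn).symm
  · exact Filter.EventuallyEq.of_eq hθ.symm
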